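/- There is an absolute constant C > 0 with the following property. For any 0 < ε < 1 and 0 < δ < 1, let S be a sparse embedding (CountSketch) random matrix with r rows and d columns, where r ≥ C·d²/(ε²δ). Then for any fixed real n×d matrix A, with probability at least 1 − δ, simultaneously for all x ∈ ℝ^d it holds that (1 − ε)‖Ax‖₂² ≤ ‖SAx‖₂² ≤ (1 + ε)‖Ax‖₂², i.e., S is a (1 ± ε) ℓ₂-subspace embedding for A. -/

import Mathlib

open MeasureTheory Matrix

/-- The Euclidean norm of a vector in `ℝ^n`. -/
noncomputable def euclNorm {n : ℕ} (x : Fin n → ℝ) : ℝ := Real.sqrt (∑ i, (x i) ^ 2)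

/-- The probability space underlying a CountSketch (sparse embedding) matrix with `r`
rows and `d` columns: `2d` mutually independent uniform random variables, `d` of them
uniform on `{1,…,r}` (the hash values) and `d` of them uniform on `{−1,+1}` (the signs,
encoded as booleans), modeled by the uniform measure on the finite product space. -/
noncomputable def countSketchMeasure (r d : ℕ) (hr : r ≠ 0) :
    Measure ((Fin d → Fin r) × (Fin d → Bool)) :=
  haveI : NeZero r := ⟨hr⟩
  (PMF.uniformOfFintype ((Fin d → Fin r) × (Fin d → Bool))).toMeasure

/-- The sign `σ(j) ∈ {−1, +1}` encoded by a boolean. -/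
def countSketchSign (b : Bool) : ℝ := if b then 1 else -1

/-- The CountSketch (sparse embedding) matrix determined by hash values `ω.1` and
signs `ω.2`: the `(i,j)` entry is `σ(j)` if `h(j) = i` and `0` otherwise. -/
noncomputable def countSketch {r n : ℕ} (ω : (Fin n → Fin r) × (Fin n → Bool)) :
    Matrix (Fin r) (Fin n) ℝ :=
  Matrix.of fun i j => if ω.1 j = i then countSketchSign (ω.2 j) else 0

/-!
Let `U` have orthonormal columns spanning the column space of `A` (at most `d` of them), so
that `Ax = Uy` with `‖Ax‖ = ‖y‖`. Then `‖SAx‖² - ‖Ax‖² = yᵀ((SU)ᵀSU - I)y`, which by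
Cauchy–Schwarz is at most `‖(SU)ᵀSU - I‖_F ‖y‖²`. Each entry of this deviation matrix is
`⟨Su, Sv⟩ - ⟨u, v⟩` for unit vectors `u, v`, whose second moment is at most `2/r`: it is a sum
over pairs `j ≠ k` of `[h j = h k] σ j σ k u j v k`, and the random signs make all cross terms
vanish except those pairing `(j, k)` with itself or with `(k, j)`. Hence
`E ‖(SU)ᵀSU - I‖_F² ≤ 2d²/r ≤ ε²δ`, and Markov's inequality concludes.
-/

open Finset

lemma euclNorm_sq {n : ℕ} (x : Fin n → ℝ) : euclNorm x ^ 2 = x ⬝ᵥ x := by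
  rw [euclNorm, Real.sq_sqrt (by positivity)]
  simp only [dotProduct, sq]

lemma Matrix.mulVec_dotProduct_mulVec {m n R : Type*} [Fintype m] [Fintype n] [CommSemiring R]
    (M : Matrix m n R) (u v : n → R) : (M *ᵥ u) ⬝ᵥ (M *ᵥ v) = u ⬝ᵥ (Mᵀ * M) *ᵥ v := by
  rw [← mulVec_mulVec, dotProduct_mulVec u, vecMul_transpose]

lemma Matrix.sq_dotProduct_mulVec_le {m : Type*} [Fintype m] (B : Matrix m m ℝ) (y : m → ℝ) :
    (y ⬝ᵥ B *ᵥ y) ^ 2 ≤ (∑ j, ∑ k, B j k ^ 2) * (y ⬝ᵥ y) ^ 2 := by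
  have hBy : y ⬝ᵥ B *ᵥ y = ∑ p : m × m, B p.1 p.2 * (y p.1 * y p.2) := by
    simp only [dotProduct, mulVec, Finset.mul_sum, Fintype.sum_prod_type]
    exact sum_congr rfl fun j _ => sum_congr rfl fun k _ => by ring
  have hyy : (y ⬝ᵥ y) ^ 2 = ∑ p : m × m, (y p.1 * y p.2) ^ 2 := by
    simp only [dotProduct, sq, Finset.sum_mul_sum, Fintype.sum_prod_type]
    exact sum_congr rfl fun j _ => sum_congr rfl fun k _ => by ring
  rw [hBy, hyy, ← Fintype.sum_prod_type' (fun j k => B j k ^ 2)]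
  exact sum_mul_sq_le_sq_mul_sq _ _ _

lemma Matrix.abs_dotProduct_mulVec_sub_le {m : Type*} [Fintype m] [DecidableEq m]
    (G : Matrix m m ℝ) (y : m → ℝ) {ε : ℝ} (hε : 0 ≤ ε)
    (hG : ∑ j, ∑ k, (G - 1) j k ^ 2 ≤ ε ^ 2) :
    |y ⬝ᵥ G *ᵥ y - y ⬝ᵥ y| ≤ ε * (y ⬝ᵥ y) := by
  have hyy : 0 ≤ y ⬝ᵥ y := by simpa using dotProduct_self_star_nonneg y
  have hdev : y ⬝ᵥ G *ᵥ y - y ⬝ᵥ y = y ⬝ᵥ (G - 1) *ᵥ y := by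
    rw [sub_mulVec, one_mulVec, dotProduct_sub]
  rw [hdev]
  refine abs_le_of_sq_le_sq ?_ (by positivity)
  calc _ ≤ (∑ j, ∑ k, (G - 1) j k ^ 2) * (y ⬝ᵥ y) ^ 2 := sq_dotProduct_mulVec_le _ _
    _ ≤ ε ^ 2 * (y ⬝ᵥ y) ^ 2 := by gcongr
    _ = _ := by ring

theorem Matrix.exists_orthonormal_columns_mulVec_eq {n ι : Type*} [Fintype n] [Fintype ι]
    (A : Matrix n ι ℝ) :
    ∃ m ≤ Fintype.card ι, ∃ U : Matrix n (Fin m) ℝ, Uᵀ * U = 1 ∧ ∀ x, ∃ y, A *ᵥ x = U *ᵥ y := by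
  classical
  let W := LinearMap.range (toLpLin 2 2 A)
  let b := stdOrthonormalBasis ℝ W
  refine ⟨Module.finrank ℝ W, ?_, of fun i j => (b j : EuclideanSpace ℝ n) i, ?_, fun x => ?_⟩
  · simpa using LinearMap.finrank_range_le (toLpLin 2 2 A)
  · ext j k
    have hjk := (orthonormal_iff_ite.mp b.orthonormal) j k
    rw [Submodule.coe_inner, PiLp.inner_apply] at hjk
    rw [one_apply, ← hjk]
    simp only [mul_apply, transpose_apply, of_apply, inner]
    exact sum_congr rfl fun i _ => mul_comm _ _
  · let w : W := ⟨toLpLin 2 2 A (WithLp.toLp 2 x), LinearMap.mem_range_self _ _⟩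
    refine ⟨fun j => b.repr w j, funext fun i => ?_⟩
    have hw := congrArg (fun v : W => (v : EuclideanSpace ℝ n) i) (b.sum_repr w)
    simp only [Submodule.coe_sum, Submodule.coe_smul, WithLp.ofLp_sum, Finset.sum_apply,
      PiLp.smul_apply, smul_eq_mul] at hw
    simp only [mulVec, dotProduct, of_apply, mul_comm _ (b.repr w _)]
    exact hw.symm

def IsSubspaceEmbedding {r n d : ℕ} (ε : ℝ) (S : Matrix (Fin r) (Fin n) ℝ)
    (A : Matrix (Fin n) (Fin d) ℝ) : Prop :=
  ∀ x : Fin d → ℝ,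
    (1 - ε) * euclNorm (A *ᵥ x) ^ 2 ≤ euclNorm ((S * A) *ᵥ x) ^ 2 ∧
      euclNorm ((S * A) *ᵥ x) ^ 2 ≤ (1 + ε) * euclNorm (A *ᵥ x) ^ 2

theorem isSubspaceEmbedding_of_sum_sq_le {r n d m : ℕ} {ε : ℝ} {S : Matrix (Fin r) (Fin n) ℝ}
    {A : Matrix (Fin n) (Fin d) ℝ} {U : Matrix (Fin n) (Fin m) ℝ} (hU : Uᵀ * U = 1)
    (hAU : ∀ x, ∃ y, A *ᵥ x = U *ᵥ y) (hε : 0 ≤ ε)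
    (hS : ∑ j, ∑ k, ((S * U)ᵀ * (S * U) - 1 : Matrix (Fin m) (Fin m) ℝ) j k ^ 2 ≤ ε ^ 2) :
    IsSubspaceEmbedding ε S A := by
  intro x
  obtain ⟨y, hy⟩ := hAU x
  have hAx : euclNorm (A *ᵥ x) ^ 2 = y ⬝ᵥ y := by
    rw [euclNorm_sq, hy, mulVec_dotProduct_mulVec, hU, one_mulVec]
  have hSAx : euclNorm ((S * A) *ᵥ x) ^ 2 = y ⬝ᵥ ((S * U)ᵀ * (S * U)) *ᵥ y := by
    rw [euclNorm_sq, ← mulVec_mulVec, hy, mulVec_mulVec, mulVec_dotProduct_mulVec]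
  have hdev := abs_le.mp (abs_dotProduct_mulVec_sub_le _ y hε hS)
  rw [hAx, hSAx]
  constructor <;> linarith [hdev.1, hdev.2]

section Collisions

variable {ι κ : Type*}

@[simp] lemma countSketchSign_not (b : Bool) : countSketchSign (!b) = -countSketchSign b := by
  cases b <;> simp [countSketchSign]

@[simp] lemma countSketchSign_mul_self (b : Bool) : countSketchSign b * countSketchSign b = 1 := by
  cases b <;> simp [countSketchSign]

def collision [DecidableEq κ] (h : ι → κ) (p : ι × ι) : ℝ := if h p.1 = h p.2 then 1 else 0

def signProd (σ : ι → Bool) (p : ι × ι) : ℝ := countSketchSign (σ p.1) * countSketchSign (σ p.2)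

@[simp] lemma collision_swap [DecidableEq κ] (h : ι → κ) (p : ι × ι) :
    collision h p.swap = collision h p := by
  simp only [collision, Prod.fst_swap, Prod.snd_swap, eq_comm]

@[simp] lemma signProd_swap (σ : ι → Bool) (p : ι × ι) : signProd σ p.swap = signProd σ p :=
  mul_comm _ _

@[simp] lemma collision_mul_self [DecidableEq κ] (h : ι → κ) (p : ι × ι) :
    collision h p * collision h p = collision h p := by
  unfold collision; split_ifs <;> norm_num

@[simp] lemma signProd_mul_self (σ : ι → Bool) (p : ι × ι) : signProd σ p * signProd σ p = 1 := by
  rw [signProd, mul_mul_mul_comm, countSketchSign_mul_self, countSketchSign_mul_self, one_mul]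

lemma card_mul_sum_collision [Fintype ι] [DecidableEq ι] [Fintype κ] [DecidableEq κ] {a b : ι}
    (hab : a ≠ b) : Fintype.card κ * ∑ h : ι → κ, collision h (a, b) =
      (Fintype.card κ : ℝ) ^ Fintype.card ι := by
  let e := Equiv.piSplitAt a (fun _ : ι => κ)
  have hsplit : ∀ z, collision (e.symm z) (a, b) = if z.1 = z.2 ⟨b, hab.symm⟩ then 1 else 0 := by
    intro z
    simp [collision, e, Equiv.piSplitAt_symm_apply, hab.symm]
  rw [← e.symm.sum_comp, Fintype.sum_congr _ _ hsplit, Fintype.sum_prod_type_right]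
  simp [Fintype.card_subtype_compl, ← pow_succ', Nat.sub_add_cancel (Fintype.card_pos_iff.mpr ⟨a⟩)]

lemma sum_signProd_mul_signProd_eq_zero [Fintype ι] [DecidableEq ι] {p q : ι × ι}
    (hq : q.1 ≠ q.2) (hqp : q ≠ p) (hqp' : q ≠ p.swap) :
    ∑ σ : ι → Bool, signProd σ p * signProd σ q = 0 := by
  -- `i` occurs exactly once among `p.1, p.2, q.1, q.2`, so flipping `σ i` negates the summand.
  obtain ⟨i, hiq, hip₁, hip₂⟩ :
      ∃ i, (i = q.1 ∧ i ≠ q.2 ∨ i = q.2 ∧ i ≠ q.1) ∧ i ≠ p.1 ∧ i ≠ p.2 := by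
    by_cases h : q.1 = p.1 ∨ q.1 = p.2
    · refine ⟨q.2, Or.inr ⟨rfl, hq.symm⟩, ?_⟩
      grind [Prod.ext_iff, Prod.fst_swap, Prod.snd_swap]
    · exact ⟨q.1, Or.inl ⟨rfl, hq⟩, not_or.mp h⟩
  refine sum_ninvolution (fun σ => Function.update σ i (!σ i)) (fun σ => ?_)
    (fun σ _ => by simp) (fun _ => mem_univ _) (fun σ => by simp)
  rcases hiq with ⟨rfl, h⟩ | ⟨rfl, h⟩ <;>
    simp only [signProd, Function.update_self, Function.update_of_ne hip₁.symm,
      Function.update_of_ne hip₂.symm, Function.update_of_ne h.symm, countSketchSign_not] <;> ring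

lemma Finset.sum_offDiag_univ_eq_sub [Fintype ι] [DecidableEq ι] {M : Type*} [AddCommGroup M]
    (f : ι × ι → M) : ∑ p ∈ univ.offDiag, f p = ∑ p, f p - ∑ i, f (i, i) := by
  rw [eq_sub_iff_add_eq', ← sum_diag, ← sum_union (disjoint_diag_offDiag _), diag_union_offDiag,
    univ_product_univ]

theorem card_mul_sum_sq_sum_offDiag [Fintype ι] [DecidableEq ι] [Fintype κ] [DecidableEq κ]
    (c : ι × ι → ℝ) :
    Fintype.card κ * ∑ h : ι → κ, ∑ σ : ι → Bool,
        (∑ p ∈ univ.offDiag, collision h p * signProd σ p * c p) ^ 2 =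
      (Fintype.card κ : ℝ) ^ Fintype.card ι * 2 ^ Fintype.card ι *
        ∑ p ∈ univ.offDiag, c p * (c p + c p.swap) := by
  have hfactor : ∀ p q, ∑ h : ι → κ, ∑ σ : ι → Bool,
      collision h p * signProd σ p * c p * (collision h q * signProd σ q * c q) =
        c p * c q * ((∑ h : ι → κ, collision h p * collision h q) *
          ∑ σ : ι → Bool, signProd σ p * signProd σ q) := by
    intro p q
    rw [sum_mul_sum, mul_sum]
    exact sum_congr rfl fun h _ => by rw [mul_sum]; exact sum_congr rfl fun σ _ => by ring
  have hpair : ∀ p ∈ (univ : Finset ι).offDiag, Fintype.card κ * ∑ q ∈ univ.offDiag,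
      c p * c q * ((∑ h : ι → κ, collision h p * collision h q) *
        ∑ σ : ι → Bool, signProd σ p * signProd σ q) =
      (Fintype.card κ : ℝ) ^ Fintype.card ι * 2 ^ Fintype.card ι * (c p * (c p + c p.swap)) := by
    intro p hp
    have hp' : p.1 ≠ p.2 := (mem_offDiag.mp hp).2.2
    have hswap : p.swap ∈ (univ : Finset ι).offDiag := by simpa using hp'.symm
    have hcol := card_mul_sum_collision (κ := κ) hp'
    rw [sum_eq_add p p.swap (fun h => hp' (congrArg Prod.snd h).symm)
      (fun q hq hqp => by
        rw [sum_signProd_mul_signProd_eq_zero (mem_offDiag.mp hq).2.2 hqp.1 hqp.2, mul_zero,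
          mul_zero])
      (absurd hp) (absurd hswap)]
    simp only [collision_swap, signProd_swap, collision_mul_self, signProd_mul_self, sum_const,
      card_univ, Fintype.card_fun, Fintype.card_bool, nsmul_eq_mul, mul_one, Prod.mk.eta] at hcol ⊢
    rw [← hcol]
    push_cast
    ring
  calc _ = Fintype.card κ * ∑ p ∈ univ.offDiag, ∑ q ∈ univ.offDiag, ∑ h : ι → κ, ∑ σ : ι → Bool,
        collision h p * signProd σ p * c p * (collision h q * signProd σ q * c q) := by
        simp only [sq, sum_mul_sum, ← Fintype.sum_prod_type']
        rw [sum_comm]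
        exact congrArg _ (sum_congr rfl fun p _ => sum_comm)
    _ = _ := by
        simp only [hfactor]
        rw [mul_sum, sum_congr rfl hpair, ← mul_sum]

theorem sum_offDiag_mul_add_swap_le [Fintype ι] [DecidableEq ι] (u v : ι → ℝ) :
    ∑ p ∈ univ.offDiag, u p.1 * v p.2 * (u p.1 * v p.2 + u p.2 * v p.1) ≤
      2 * (u ⬝ᵥ u) * (v ⬝ᵥ v) := by
  have hdiag : 0 ≤ ∑ i, u i * v i * (u i * v i + u i * v i) :=
    sum_nonneg fun i _ => by nlinarith [sq_nonneg (u i * v i)]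
  have hfull : ∑ p : ι × ι, u p.1 * v p.2 * (u p.1 * v p.2 + u p.2 * v p.1) =
      (u ⬝ᵥ u) * (v ⬝ᵥ v) + (u ⬝ᵥ v) ^ 2 := by
    simp only [dotProduct, sq, sum_mul_sum, Fintype.sum_prod_type, ← sum_add_distrib]
    exact sum_congr rfl fun j _ => sum_congr rfl fun k _ => by ring
  have hcs : (u ⬝ᵥ v) ^ 2 ≤ (u ⬝ᵥ u) * (v ⬝ᵥ v) := by
    simpa only [dotProduct, sq] using sum_mul_sq_le_sq_mul_sq univ u v
  rw [sum_offDiag_univ_eq_sub, hfull]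
  linarith

end Collisions

section Sketch

variable {r n : ℕ}

lemma countSketch_transpose_mul_self_apply (ω : (Fin n → Fin r) × (Fin n → Bool)) (j k : Fin n) :
    ((countSketch ω)ᵀ * countSketch ω) j k = collision ω.1 (j, k) * signProd ω.2 (j, k) := by
  simp only [mul_apply, transpose_apply, countSketch, of_apply, ite_mul, zero_mul, mul_ite,
    mul_zero, sum_ite_eq, mem_univ, if_true, one_mul, collision, signProd]

lemma countSketch_mulVec_dotProduct_mulVec (ω : (Fin n → Fin r) × (Fin n → Bool))
    (u v : Fin n → ℝ) :
    (countSketch ω *ᵥ u) ⬝ᵥ (countSketch ω *ᵥ v) =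
      u ⬝ᵥ v + ∑ p ∈ univ.offDiag, collision ω.1 p * signProd ω.2 p * (u p.1 * v p.2) := by
  rw [mulVec_dotProduct_mulVec, sum_offDiag_univ_eq_sub]
  simp only [dotProduct, mulVec, mul_sum, countSketch_transpose_mul_self_apply,
    Fintype.sum_prod_type, collision, signProd, countSketchSign_mul_self, if_true, one_mul,
    add_sub_cancel]
  exact sum_congr rfl fun _ _ => sum_congr rfl fun _ _ => by ring

instance isProbabilityMeasure_countSketchMeasure (hr : r ≠ 0) :
    IsProbabilityMeasure (countSketchMeasure r n hr) := by
  unfold countSketchMeasure; infer_instance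

lemma integral_countSketchMeasure (hr : r ≠ 0) (f : (Fin n → Fin r) × (Fin n → Bool) → ℝ) :
    ∫ ω, f ω ∂countSketchMeasure r n hr = (∑ h, ∑ σ, f (h, σ)) / (r ^ n * 2 ^ n) := by
  have : NeZero r := ⟨hr⟩
  rw [countSketchMeasure, PMF.integral_eq_sum, ← Fintype.sum_prod_type', sum_div]
  simp [PMF.uniformOfFintype_apply, Fintype.card_prod, div_eq_inv_mul]

theorem integral_countSketch_dotProduct_sub_sq_le (hr : r ≠ 0) (u v : Fin n → ℝ) :
    ∫ ω, ((countSketch ω *ᵥ u) ⬝ᵥ (countSketch ω *ᵥ v) - u ⬝ᵥ v) ^ 2 ∂countSketchMeasure r n hr ≤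
      2 * (u ⬝ᵥ u) * (v ⬝ᵥ v) / r := by
  have hr' : (0 : ℝ) < r := Nat.cast_pos.mpr (Nat.pos_of_ne_zero hr)
  have hsum := card_mul_sum_sq_sum_offDiag (ι := Fin n) (κ := Fin r) (fun p => u p.1 * v p.2)
  simp only [Fintype.card_fin, Prod.fst_swap, Prod.snd_swap] at hsum
  simp only [integral_countSketchMeasure, countSketch_mulVec_dotProduct_mulVec, add_sub_cancel_left]
  rw [div_le_div_iff₀ (by positivity) hr', mul_comm, hsum, mul_comm (2 * _ * _)]
  exact mul_le_mul_of_nonneg_left (sum_offDiag_mul_add_swap_le u v) (by positivity)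

theorem integral_sum_sq_transpose_mul_sub_one_le (hr : r ≠ 0) {m : ℕ} {U : Matrix (Fin n) (Fin m) ℝ}
    (hU : Uᵀ * U = 1) :
    ∫ ω : (Fin n → Fin r) × (Fin n → Bool),
      ∑ j, ∑ k, ((countSketch ω * U)ᵀ * (countSketch ω * U) - 1 : Matrix (Fin m) (Fin m) ℝ) j k ^ 2
      ∂countSketchMeasure r n hr ≤ 2 * (m : ℝ) ^ 2 / r := by
  have hentry : ∀ (ω : (Fin n → Fin r) × (Fin n → Bool)) j k,
      ((countSketch ω * U)ᵀ * (countSketch ω * U) - 1 : Matrix (Fin m) (Fin m) ℝ) j k =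
      (countSketch ω *ᵥ Uᵀ j) ⬝ᵥ (countSketch ω *ᵥ Uᵀ k) - Uᵀ j ⬝ᵥ Uᵀ k := by
    intro ω j k
    rw [← hU]
    rfl
  have hnorm : ∀ j, Uᵀ j ⬝ᵥ Uᵀ j = 1 := fun j =>
    (congrFun (congrFun hU j) j).trans (one_apply_eq j)
  simp only [hentry]
  rw [integral_finsetSum _ fun j _ => .of_finite]
  calc _ ≤ ∑ _j : Fin m, ∑ _k : Fin m, 2 / (r : ℝ) := by
        refine sum_le_sum fun j _ => ?_
        rw [integral_finsetSum _ fun k _ => .of_finite]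
        refine sum_le_sum fun k _ => ?_
        simpa [hnorm] using integral_countSketch_dotProduct_sub_sq_le hr (Uᵀ j) (Uᵀ k)
    _ = _ := by simp; ring

end Sketch

theorem ofReal_one_sub_le_measure_lt_of_integral_le {Ω : Type*} [MeasurableSpace Ω] [Finite Ω]
    [MeasurableSingletonClass Ω] {μ : Measure Ω} [IsProbabilityMeasure μ] {f : Ω → ℝ}
    (hf : 0 ≤ f) {t δ : ℝ} (ht : 0 < t) (hμf : ∫ ω, f ω ∂μ ≤ t * δ) :
    ENNReal.ofReal (1 - δ) ≤ μ {ω | f ω < t} := by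
  have hmarkov : t * μ.real {ω | t ≤ f ω} ≤ ∫ ω, f ω ∂μ :=
    mul_meas_ge_le_integral_of_nonneg (ae_of_all _ hf) .of_finite t
  have hcompl : {ω | f ω < t} = {ω | t ≤ f ω}ᶜ := by ext; simp
  rw [hcompl, ENNReal.ofReal_le_iff_le_toReal (measure_ne_top _ _), ← measureReal_def,
    probReal_compl_eq_one_sub (Set.toFinite _).measurableSet]
  linarith [le_of_mul_le_mul_left (hmarkov.trans hμf) ht]

/-- a CountSketch matrix with `r ≥ C·d²/(ε²δ)` rows is, with probability
at least `1 − δ`, a `(1 ± ε)` ℓ₂-subspace embedding for any fixed `n × d` matrix `A`. -/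
theorem stmt2 :
    ∃ C : ℝ, 0 < C ∧
      ∀ (ε δ : ℝ), 0 < ε → ε < 1 → 0 < δ → δ < 1 →
      ∀ (r n d : ℕ) (hr : r ≠ 0), (r : ℝ) ≥ C * (d : ℝ) ^ 2 / (ε ^ 2 * δ) →
      ∀ A : Matrix (Fin n) (Fin d) ℝ,
        countSketchMeasure r n hr
          {ω | ∀ x : Fin d → ℝ,
            (1 - ε) * euclNorm (A.mulVec x) ^ 2 ≤ euclNorm ((countSketch ω * A).mulVec x) ^ 2 ∧
            euclNorm ((countSketch ω * A).mulVec x) ^ 2 ≤ (1 + ε) * euclNorm (A.mulVec x) ^ 2}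
          ≥ ENNReal.ofReal (1 - δ) := by
  refine ⟨2, two_pos, fun ε δ hε _ hδ _ r n d hr hrd A => ?_⟩
  obtain ⟨m, hmd, U, hU, hAU⟩ := A.exists_orthonormal_columns_mulVec_eq
  have hr' : (0 : ℝ) < r := Nat.cast_pos.mpr (Nat.pos_of_ne_zero hr)
  have hm : (m : ℝ) ≤ d := by exact_mod_cast (Fintype.card_fin d ▸ hmd)
  have hint := integral_sum_sq_transpose_mul_sub_one_le hr hU
  have hbound : 2 * (m : ℝ) ^ 2 / r ≤ ε ^ 2 * δ := by
    rw [ge_iff_le, div_le_iff₀ (by positivity)] at hrd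
    rw [div_le_iff₀ hr']
    nlinarith
  refine (ofReal_one_sub_le_measure_lt_of_integral_le (fun ω => by positivity) (by positivity)
    (hint.trans hbound)).trans (measure_mono fun ω hω => ?_)
  exact isSubspaceEmbedding_of_sum_sq_le hU hAU hε.le hω.le
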